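/- Let α > -1, β ≥ 0 and x > 0. Then the normalized incomplete Volterra function is supermultiplicative-complementary in s: for all s, s′ > 0, G_β(x, α, s) · G_β(x, α, s′) − G_β(x, α, s + s′) ≥ 0. Equivalently, G*_β(x, α, s+s′) − G*_β(x, α, s) − G*_β(x, α, s′) + G*_β(x, α, s) · G*_β(x, α, s′) ≥ 0, where G*_β = 1 − G_β. -/

import Mathlib

open MeasureTheory Real Set

/-- The Volterra function `μ(x, β, α) = ∫₀^∞ x^(t+α) t^β / (Γ(t+α+1) Γ(β+1)) dt`. -/
noncomputable def volterraMu (x β α : ℝ) : ℝ :=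
  ∫ t in Set.Ioi (0 : ℝ),
    x ^ (t + α) * t ^ β / (Real.Gamma (t + α + 1) * Real.Gamma (β + 1))

/-- The incomplete Volterra function
`μ(x, β, α, s) = ∫_s^∞ x^(t+α) t^β / (Γ(t+α+1) Γ(β+1)) dt`. -/
noncomputable def volterraMuInc (x β α s : ℝ) : ℝ :=
  ∫ t in Set.Ioi s,
    x ^ (t + α) * t ^ β / (Real.Gamma (t + α + 1) * Real.Gamma (β + 1))

/-- The incomplete Volterra function from below
`μ*(x, β, α, s) = ∫₀^s x^(t+α) t^β / (Γ(t+α+1) Γ(β+1)) dt`. -/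
noncomputable def volterraMuIncStar (x β α s : ℝ) : ℝ :=
  ∫ t in Set.Ioc (0 : ℝ) s,
    x ^ (t + α) * t ^ β / (Real.Gamma (t + α + 1) * Real.Gamma (β + 1))

/-- The normalized incomplete Volterra function `G_β(x, α, s) = μ(x,β,α,s)/μ(x,β,α)`. -/
noncomputable def volterraG (β x α s : ℝ) : ℝ :=
  volterraMuInc x β α s / volterraMu x β α

/-- The normalized incomplete Volterra function from below
`G*_β(x, α, s) = μ*(x,β,α,s)/μ(x,β,α)`. -/
noncomputable def volterraGStar (β x α s : ℝ) : ℝ :=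
  volterraMuIncStar x β α s / volterraMu x β α

/-!
With `f t = x^(t+α) t^β / (Γ(t+α+1) Γ(β+1))` and the tail integrals `I(s) = ∫_s^∞ f`, both
inequalities say `I(0) I(s+s') ≤ I(s) I(s')` after clearing the denominator `I(0)² = μ²` (for the
second one, `G* = 1 - G`). This follows from `f u f(v+s) ≤ f(u+s) f v` for `u ≤ v`: splitting
`I(0) = ∫_0^{s'} f + I(s')` and `I(s) = ∫_0^{s'} f(·+s) + I(s+s')`, it suffices to integrate
`f u · I(s+s') ≤ f(u+s) · I(s')` over `u < s'`. The pointwise inequality holds factor by factor: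
`x^t` is log-linear, `t^β` is log-concave for `β ≥ 0`, and `1/Γ` is log-concave because `Γ` is
log-convex (Bohr–Mollerup).
-/

theorem ConvexOn.map_add_sub_map_le {𝕜 : Type*} [Field 𝕜] [LinearOrder 𝕜]
    [IsStrictOrderedRing 𝕜] {S : Set 𝕜} {g : 𝕜 → 𝕜} (hg : ConvexOn 𝕜 S g) {a b d : 𝕜}
    (ha : a ∈ S) (hbd : b + d ∈ S) (hab : a ≤ b) (hd : 0 ≤ d) :
    g (a + d) - g a ≤ g (b + d) - g b := by
  rcases hd.eq_or_lt with rfl | hd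
  · simp
  have had : a + d ∈ S := hg.1.ordConnected.out ha hbd ⟨by linarith, by linarith⟩
  have hb : b ∈ S := hg.1.ordConnected.out ha hbd ⟨hab, by linarith⟩
  have h₁ := hg.secant_mono ha had hbd (by linarith) (by linarith) (by linarith)
  have h₂ := hg.secant_mono hbd ha hb (by linarith) (by linarith) hab
  rw [add_sub_cancel_left] at h₁
  rw [← neg_div_neg_eq (g a - _), ← neg_div_neg_eq (g b - _), neg_sub, neg_sub, neg_sub, neg_sub,
    add_sub_cancel_left] at h₂
  exact (div_le_div_iff_of_pos_right hd).1 (h₁.trans h₂)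

theorem Real.Gamma_add_mul_Gamma_le {a b d : ℝ} (ha : 0 < a) (hab : a ≤ b) (hd : 0 ≤ d) :
    Real.Gamma (a + d) * Real.Gamma b ≤ Real.Gamma a * Real.Gamma (b + d) := by
  have hΓa := Real.Gamma_pos_of_pos ha
  have hΓb := Real.Gamma_pos_of_pos (ha.trans_le hab)
  have hΓad := Real.Gamma_pos_of_pos (show 0 < a + d by linarith)
  have hΓbd := Real.Gamma_pos_of_pos (show 0 < b + d by linarith)
  have hlog := Real.convexOn_log_Gamma.map_add_sub_map_le ha (show 0 < b + d by linarith) hab hd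
  simp only [Function.comp_apply] at hlog
  rw [← Real.log_le_log_iff (by positivity) (by positivity),
    Real.log_mul (by positivity) (by positivity), Real.log_mul (by positivity) (by positivity)]
  linarith

theorem Real.rpow_mul_rpow_add_le {u v d β : ℝ} (hu : 0 ≤ u) (huv : u ≤ v) (hd : 0 ≤ d)
    (hβ : 0 ≤ β) : u ^ β * (v + d) ^ β ≤ (u + d) ^ β * v ^ β := by
  rw [← Real.mul_rpow hu (by linarith), ← Real.mul_rpow (by linarith) (by linarith)]
  exact Real.rpow_le_rpow (mul_nonneg hu (by linarith)) (by nlinarith) hβ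

theorem integral_Ioi_comp_add_right {E : Type*} [NormedAddCommGroup E] [NormedSpace ℝ E]
    (f : ℝ → E) (a d : ℝ) :
    ∫ v in Ioi a, f (v + d) = ∫ t in Ioi (a + d), f t := by
  have h := (measurePreserving_add_right volume d).setIntegral_preimage_emb
    (measurableEmbedding_addRight d) f (Ioi (a + d))
  rwa [preimage_add_const_Ioi, add_sub_cancel_right] at h

theorem integrableOn_Ioi_comp_add_right {E : Type*} [NormedAddCommGroup E] {f : ℝ → E}
    {a d : ℝ} :
    IntegrableOn (fun v ↦ f (v + d)) (Ioi a) ↔ IntegrableOn f (Ioi (a + d)) := by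
  have h := (measurePreserving_add_right volume d).integrableOn_comp_preimage
    (measurableEmbedding_addRight d) (f := f) (s := Ioi (a + d))
  rwa [preimage_add_const_Ioi, add_sub_cancel_right] at h

theorem integral_Ioi_mul_integral_Ioi_add_le {f : ℝ → ℝ} (hf : IntegrableOn f (Ioi 0))
    (hshift : ∀ u v d, 0 < u → u ≤ v → 0 ≤ d → f u * f (v + d) ≤ f (u + d) * f v)
    {s s' : ℝ} (hs : 0 ≤ s) (hs' : 0 ≤ s') :
    (∫ t in Ioi 0, f t) * ∫ t in Ioi (s + s'), f t ≤
      (∫ t in Ioi s, f t) * ∫ t in Ioi s', f t := by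
  have hf_Ioi : ∀ {a : ℝ}, 0 ≤ a → IntegrableOn f (Ioi a) :=
    fun ha ↦ hf.mono_set (Ioi_subset_Ioi ha)
  have hf_Ioc : ∀ {a b : ℝ}, 0 ≤ a → a ≤ b → IntervalIntegrable f volume a b := fun ha hab ↦
    (intervalIntegrable_iff_integrableOn_Ioc_of_le hab).2
      (hf.mono_set fun t ht ↦ ha.trans_lt ht.1)
  have hP : ∫ t in Ioi (s + s'), f t = ∫ v in Ioi s', f (v + s) := by
    rw [integral_Ioi_comp_add_right, add_comm]
  have hP_int : IntegrableOn (fun v ↦ f (v + s)) (Ioi s') :=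
    integrableOn_Ioi_comp_add_right.2 (hf_Ioi (by linarith))
  have hinner : ∀ u ∈ Ioo 0 s',
      f u * ∫ t in Ioi (s + s'), f t ≤ f (u + s) * ∫ t in Ioi s', f t := fun u hu ↦ by
    rw [hP, ← integral_const_mul, ← integral_const_mul]
    exact setIntegral_mono_on (hP_int.const_mul _) ((hf_Ioi hs').const_mul _) measurableSet_Ioi
      fun v hv ↦ hshift u v s hu.1 (hu.2.le.trans hv.le) hs
  have houter : (∫ u in 0..s', f u) * ∫ t in Ioi (s + s'), f t ≤
      (∫ u in 0..s', f (u + s)) * ∫ t in Ioi s', f t := by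
    have hshift_int : IntervalIntegrable (fun u ↦ f (u + s)) volume 0 s' := by
      simpa using (hf_Ioc (a := 0 + s) (b := s' + s) (by linarith) (by linarith)).comp_add_right s
    rw [← intervalIntegral.integral_mul_const, ← intervalIntegral.integral_mul_const]
    exact intervalIntegral.integral_mono_on_of_le_Ioo hs' ((hf_Ioc le_rfl hs').mul_const _)
      (hshift_int.mul_const _) hinner
  have hsplit₀ : ∫ t in Ioi 0, f t = (∫ u in 0..s', f u) + ∫ t in Ioi s', f t :=
    (intervalIntegral.integral_interval_add_Ioi hf (hf_Ioi hs')).symm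
  have hsplit : ∫ t in Ioi s, f t = (∫ u in 0..s', f (u + s)) + ∫ t in Ioi (s + s'), f t := by
    rw [intervalIntegral.integral_comp_add_right, zero_add, add_comm s' s]
    exact (intervalIntegral.integral_interval_add_Ioi (hf_Ioi hs) (hf_Ioi (by linarith))).symm
  rw [hsplit₀, hsplit]
  linear_combination houter

noncomputable def volterraKernel (x β α t : ℝ) : ℝ :=
  x ^ (t + α) * t ^ β / (Real.Gamma (t + α + 1) * Real.Gamma (β + 1))

theorem volterraKernel_mul_shift_le {x α β : ℝ} (hx : 0 < x) (hα : -1 < α) (hβ : 0 ≤ β)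
    {u v d : ℝ} (hu : 0 < u) (huv : u ≤ v) (hd : 0 ≤ d) :
    volterraKernel x β α u * volterraKernel x β α (v + d) ≤
      volterraKernel x β α (u + d) * volterraKernel x β α v := by
  have hΓ : 0 < Real.Gamma (u + d + α + 1) * Real.Gamma (v + α + 1) :=
    mul_pos (Real.Gamma_pos_of_pos (by linarith)) (Real.Gamma_pos_of_pos (by linarith))
  have hexp : x ^ (u + α) * x ^ (v + d + α) = x ^ (u + d + α) * x ^ (v + α) := by
    rw [← Real.rpow_add hx, ← Real.rpow_add hx]
    ring_nf
  have hpow := Real.rpow_mul_rpow_add_le hu.le huv hd hβ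
  have hgamma : Real.Gamma (u + d + α + 1) * Real.Gamma (v + α + 1) ≤
      Real.Gamma (u + α + 1) * Real.Gamma (v + d + α + 1) := by
    convert Real.Gamma_add_mul_Gamma_le (a := u + α + 1) (by linarith)
      (show u + α + 1 ≤ v + α + 1 by linarith) hd using 2 <;> ring_nf
  calc volterraKernel x β α u * volterraKernel x β α (v + d)
      = x ^ (u + α) * x ^ (v + d + α) * (u ^ β * (v + d) ^ β) /
          (Real.Gamma (u + α + 1) * Real.Gamma (v + d + α + 1) * Real.Gamma (β + 1) ^ 2) := by
        unfold volterraKernel; ring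
    _ ≤ x ^ (u + d + α) * x ^ (v + α) * ((u + d) ^ β * v ^ β) /
          (Real.Gamma (u + d + α + 1) * Real.Gamma (v + α + 1) * Real.Gamma (β + 1) ^ 2) := by
        have hv : 0 < v := hu.trans_le huv
        rw [hexp]
        gcongr
    _ = volterraKernel x β α (u + d) * volterraKernel x β α v := by
        unfold volterraKernel; ring

theorem volterraMu_mul_volterraMuInc_add_le {x α β : ℝ} (hx : 0 < x) (hα : -1 < α)
    (hβ : 0 ≤ β) (hint : IntegrableOn (volterraKernel x β α) (Ioi 0)) {s s' : ℝ} (hs : 0 ≤ s)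
    (hs' : 0 ≤ s') :
    volterraMu x β α * volterraMuInc x β α (s + s') ≤
      volterraMuInc x β α s * volterraMuInc x β α s' :=
  integral_Ioi_mul_integral_Ioi_add_le hint
    (fun _ _ _ hu huv hd ↦ volterraKernel_mul_shift_le hx hα hβ hu huv hd) hs hs'

theorem volterraMuIncStar_add_volterraMuInc {x α β t : ℝ}
    (hint : IntegrableOn (volterraKernel x β α) (Ioi 0)) (ht : 0 ≤ t) :
    volterraMuIncStar x β α t + volterraMuInc x β α t = volterraMu x β α := by
  rw [volterraMuIncStar, ← intervalIntegral.integral_of_le ht]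
  exact intervalIntegral.integral_interval_add_Ioi hint (hint.mono_set (Ioi_subset_Ioi ht))

theorem volterraGStar_eq_one_sub_volterraG {x α β t : ℝ} (hμ : volterraMu x β α ≠ 0)
    (ht : 0 ≤ t) : volterraGStar β x α t = 1 - volterraG β x α t := by
  have hsum := volterraMuIncStar_add_volterraMuInc (Integrable.of_integral_ne_zero hμ) ht
  rw [volterraGStar, volterraG, eq_sub_iff_add_eq, ← add_div, hsum, div_self hμ]

/-- For `α > -1`, `β ≥ 0` and `x > 0`, the normalized incomplete Volterra function
satisfies `G_β(x,α,s) G_β(x,α,s′) − G_β(x,α,s+s′) ≥ 0`, equivalently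
`G*_β(x,α,s+s′) − G*_β(x,α,s) − G*_β(x,α,s′) + G*_β(x,α,s) G*_β(x,α,s′) ≥ 0`. -/
theorem volterraG_submultiplicative (x α β : ℝ)
    (hx : 0 < x) (hα : -1 < α) (hβ : 0 ≤ β) :
    ∀ s s' : ℝ, 0 < s → 0 < s' →
      (0 ≤ volterraG β x α s * volterraG β x α s' - volterraG β x α (s + s')) ∧
      (0 ≤ volterraGStar β x α (s + s') - volterraGStar β x α s -
        volterraGStar β x α s' + volterraGStar β x α s * volterraGStar β x α s') := by
  intro s s' hs hs'
  rcases eq_or_ne (volterraMu x β α) 0 with hμ | hμ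
  · simp [volterraG, volterraGStar, hμ]
  have hG : 0 ≤ volterraG β x α s * volterraG β x α s' - volterraG β x α (s + s') := by
    have hkey := volterraMu_mul_volterraMuInc_add_le hx hα hβ
      (Integrable.of_integral_ne_zero hμ) hs.le hs'.le
    have hexpand : volterraG β x α s * volterraG β x α s' - volterraG β x α (s + s') =
        (volterraMuInc x β α s * volterraMuInc x β α s' -
          volterraMu x β α * volterraMuInc x β α (s + s')) / volterraMu x β α ^ 2 := by
      unfold volterraG; field_simp
    rw [hexpand]
    exact div_nonneg (sub_nonneg.2 hkey) (sq_nonneg _)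
  refine ⟨hG, ?_⟩
  rw [volterraGStar_eq_one_sub_volterraG hμ (by linarith),
    volterraGStar_eq_one_sub_volterraG hμ hs.le, volterraGStar_eq_one_sub_volterraG hμ hs'.le]
  linear_combination hG
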